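/- Define G : ℝ → ℝ by G(h) = sgn(h − h*)·((2/3)h√h − 2h*√h + (4/3)h*√h*) for h > 0 and G(h) = −(4/3)h*√h* + h for h ≤ 0, where h* > 0 is a constant. Then G is continuous on ℝ, continuously differentiable on (−∞,0) ∪ (0,+∞), strictly increasing, and hence admits a globally defined inverse G^{-1} : ℝ → ℝ. -/

import Mathlib

open Real Set Filter

/-! Put `a = √h*` and `u = √h`. The cubic `(2/3)u³ - 2a²u + (4/3)a³` factors as
`(2/3)(u - a)²(u + 2a)`, and `sgn(h - h*) = sgn(u - a)`, so `G h = Φ (√h) + min h 0` for every `h`,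
where `Φ u = cubicProfile a u = (2/3)(u - a)|u - a|(u + 2a)` (at `h ≤ 0`, `√h = 0` and `Φ 0 = -(4/3)a³`).
The function `Φ` is `C¹` because `u ↦ u|u|` is, strictly increasing on `[0, ∞)`, and tends to `+∞`;
these properties pass to `Φ ∘ √ + min · 0`. -/

theorem hasDerivAt_mul_abs (x : ℝ) : HasDerivAt (fun u : ℝ => u * |u|) (2 * |x|) x := by
  refine hasDerivAt_of_hasDerivAt_of_ne' (x := 0) (g := fun y => 2 * |y|) (fun y hy => ?_)
    (by fun_prop) (by fun_prop) x
  rcases hy.lt_or_gt with hy | hy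
  · exact ((hasDerivAt_id y).mul (hasDerivAt_abs_neg hy)).congr_deriv (by
      rw [abs_of_neg hy, id]; ring)
  · exact ((hasDerivAt_id y).mul (hasDerivAt_abs_pos hy)).congr_deriv (by
      rw [abs_of_pos hy, id]; ring)

theorem contDiff_mul_abs : ContDiff ℝ 1 fun u : ℝ => u * |u| := by
  rw [contDiff_one_iff_deriv]
  refine ⟨fun x => (hasDerivAt_mul_abs x).differentiableAt, ?_⟩
  rw [funext fun x => (hasDerivAt_mul_abs x).deriv]
  fun_prop

noncomputable def cubicProfile (a u : ℝ) : ℝ := 2 / 3 * ((u - a) * |u - a|) * (u + 2 * a)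

theorem contDiff_cubicProfile (a : ℝ) : ContDiff ℝ 1 (cubicProfile a) :=
  ((contDiff_const.mul (contDiff_mul_abs.comp (contDiff_id.sub contDiff_const))).mul
    (contDiff_id.add contDiff_const))

theorem tendsto_cubicProfile_atTop (a : ℝ) : Tendsto (cubicProfile a) atTop atTop := by
  have hsub : Tendsto (fun u : ℝ => u - a) atTop atTop :=
    tendsto_atTop_add_const_right _ _ tendsto_id
  have hsq : Tendsto (fun u : ℝ => (u - a) * |u - a|) atTop atTop :=
    hsub.atTop_mul_atTop₀ (tendsto_abs_atTop_atTop.comp hsub)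
  exact (hsq.const_mul_atTop (by norm_num)).atTop_mul_atTop₀
    (tendsto_atTop_add_const_right _ _ tendsto_id)

theorem strictMonoOn_cubicProfile {a : ℝ} (ha : 0 ≤ a) :
    StrictMonoOn (cubicProfile a) (Ici 0) := by
  intro u hu v hv huv
  simp only [mem_Ici] at hu hv
  simp only [cubicProfile]
  -- `(u - a)²(u + 2a) - (v - a)²(v + 2a) = (u - v)(u² + uv + v² - 3a²)`
  rcases le_or_gt a u with hau | hua
  · rw [abs_of_nonneg (by linarith : 0 ≤ u - a), abs_of_nonneg (by linarith : 0 ≤ v - a)]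
    have hfac : 0 < u ^ 2 + u * v + v ^ 2 - 3 * a ^ 2 := by nlinarith
    nlinarith [mul_pos (sub_pos.2 huv) hfac]
  rcases le_or_gt a v with hav | hva
  · rw [abs_of_neg (by linarith : u - a < 0), abs_of_nonneg (by linarith : 0 ≤ v - a)]
    nlinarith [mul_pos (sub_pos.2 hua) (sub_pos.2 hua),
      mul_nonneg (sub_nonneg.2 hav) (sub_nonneg.2 hav)]
  · rw [abs_of_neg (by linarith : u - a < 0), abs_of_neg (by linarith : v - a < 0)]
    have hfac : 0 < 3 * a ^ 2 - u ^ 2 - u * v - v ^ 2 := by nlinarith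
    nlinarith [mul_pos (sub_pos.2 huv) hfac]

theorem cubicProfile_sqrt {hstar h : ℝ} (hstar0 : 0 ≤ hstar) (h0 : 0 ≤ h) :
    cubicProfile √hstar √h = Real.sign (h - hstar) *
      (2 / 3 * h * √h - 2 * hstar * √h + 4 / 3 * hstar * √hstar) := by
  obtain ⟨u, hu, rfl⟩ : ∃ u, 0 ≤ u ∧ h = u ^ 2 := ⟨√h, sqrt_nonneg h, (sq_sqrt h0).symm⟩
  obtain ⟨a, ha, rfl⟩ : ∃ a, 0 ≤ a ∧ hstar = a ^ 2 :=
    ⟨√hstar, sqrt_nonneg hstar, (sq_sqrt hstar0).symm⟩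
  rw [sqrt_sq hu, sqrt_sq ha, cubicProfile]
  rcases lt_trichotomy u a with hua | rfl | hau
  · rw [abs_of_neg (sub_neg.2 hua), Real.sign_of_neg (by nlinarith)]; ring
  · simp
  · rw [abs_of_pos (sub_pos.2 hau), Real.sign_of_pos (by nlinarith)]; ring

section SqrtPlusMin

variable {φ : ℝ → ℝ}

theorem strictMono_comp_sqrt_add_min (hφ : StrictMonoOn φ (Ici 0)) :
    StrictMono fun h => φ √h + min h 0 := by
  intro x y hxy
  rcases le_or_gt y 0 with hy | hy
  · simp only [sqrt_eq_zero'.2 hy, sqrt_eq_zero'.2 (hxy.le.trans hy), min_eq_left hy,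
      min_eq_left (hxy.le.trans hy)]
    linarith
  · have : φ √x < φ √y :=
      hφ (sqrt_nonneg x) (sqrt_nonneg y) ((sqrt_lt_sqrt_iff_of_pos hy).2 hxy)
    have : min x 0 ≤ min y 0 := min_le_min_right 0 hxy.le
    linarith

theorem contDiffAt_comp_sqrt_add_min (hφ : ContDiff ℝ 1 φ) {x : ℝ} (hx : x ≠ 0) :
    ContDiffAt ℝ 1 (fun h => φ √h + min h 0) x := by
  refine (hφ.contDiffAt.comp x (contDiffAt_sqrt hx)).add ?_
  rcases hx.lt_or_gt with hx | hx
  · exact contDiffAt_id.congr_of_eventuallyEq <|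
      (eventually_lt_nhds hx).mono fun y hy => min_eq_left hy.le
  · exact contDiffAt_const.congr_of_eventuallyEq <|
      (eventually_gt_nhds hx).mono fun y hy => min_eq_right hy.le

theorem continuous_comp_sqrt_add_min (hφ : Continuous φ) :
    Continuous fun h => φ √h + min h 0 :=
  (hφ.comp continuous_sqrt).add (continuous_id.min continuous_const)

theorem surjective_comp_sqrt_add_min (hφc : Continuous φ) (hφ : Tendsto φ atTop atTop) :
    Function.Surjective fun h => φ √h + min h 0 := by
  refine (continuous_comp_sqrt_add_min hφc).surjective ?_ ?_
  · refine (hφ.comp tendsto_sqrt_atTop).congr' ?_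
    filter_upwards [eventually_ge_atTop 0] with h hh
    simp [min_eq_right hh]
  · refine (tendsto_atBot_add_const_left _ (φ 0) tendsto_id).congr' ?_
    filter_upwards [eventually_le_atBot 0] with h hh
    simp [sqrt_eq_zero'.2 hh, min_eq_left hh]

end SqrtPlusMin

/-- The function `G` of Lemma 1 is continuous on `ℝ`, continuously differentiable away
from `0`, strictly increasing, and bijective (hence has a global inverse `G⁻¹ : ℝ → ℝ`). -/
theorem G_properties (hstar : ℝ) (hh : 0 < hstar) (G : ℝ → ℝ)
    (hG : G = fun h => if 0 < h then
        Real.sign (h - hstar) *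
          ((2 / 3) * h * Real.sqrt h - 2 * hstar * Real.sqrt h
            + (4 / 3) * hstar * Real.sqrt hstar)
      else -(4 / 3) * hstar * Real.sqrt hstar + h) :
    Continuous G ∧ ContDiffOn ℝ 1 G {x : ℝ | x ≠ 0} ∧ StrictMono G ∧
      Function.Bijective G := by
  have hG' : G = fun h => cubicProfile √hstar √h + min h 0 := by
    rw [hG]
    funext h
    split_ifs with hpos
    · rw [cubicProfile_sqrt hh.le hpos.le, min_eq_right hpos.le, add_zero]
    · have hneg : h ≤ 0 := not_lt.1 hpos
      have hzero := cubicProfile_sqrt hh.le le_rfl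
      rw [sqrt_zero] at hzero
      rw [sqrt_eq_zero'.2 hneg, min_eq_left hneg, hzero, Real.sign_of_neg (by linarith)]
      ring
  have hcont := (contDiff_cubicProfile √hstar).continuous
  have hmono := strictMono_comp_sqrt_add_min (strictMonoOn_cubicProfile (sqrt_nonneg hstar))
  subst hG'
  exact ⟨continuous_comp_sqrt_add_min hcont,
    fun x hx => (contDiffAt_comp_sqrt_add_min (contDiff_cubicProfile _) hx).contDiffWithinAt,
    hmono, hmono.injective, surjective_comp_sqrt_add_min hcont (tendsto_cubicProfile_atTop _)⟩
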